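/- Let d ≥ 1 and suppose that for every ε > 0 there exists C_ε > 0 such that for all k: max_α λ_α^{(k)} ≤ C_ε · (min_α λ_α^{(k)}) · ‖Q(k)‖^ε, and suppose moreover that for all k: max_α λ_α^{(k)} ≥ (min_α λ_α^{(k+1)}) · ‖Z(k+1)‖/(2d), that for each k there is an index α₀ with λ_{α₀}^{(k)} = λ_{α₀}^{(k+1)}, and that ‖Q(k)‖ ≤ ‖Q(k+1)‖. Then for every ε > 0 there exists C'_ε > 0 such that ‖Z(k+1)‖ ≤ C'_ε · ‖Q(k+1)‖^{2ε} for all k. -/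

import Mathlib

open Finset

/-!
The coordinate `α₀` left unchanged by the step gives `min λ⁽ᵏ⁾ ≤ max λ⁽ᵏ⁺¹⁾`, so applying the
balance estimate at `k` and at `k + 1` (with `‖Q(k)‖ ≤ ‖Q(k+1)‖`) yields
`max λ⁽ᵏ⁾ ≤ C_ε² · min λ⁽ᵏ⁺¹⁾ · ‖Q(k+1)‖^{2ε}`. Against the lower bound
`max λ⁽ᵏ⁾ ≥ min λ⁽ᵏ⁺¹⁾ · ‖Z(k+1)‖ / (2d)` the factor `min λ⁽ᵏ⁺¹⁾` cancels, leaving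
`‖Z(k+1)‖ ≤ 2d C_ε² ‖Q(k+1)‖^{2ε}`.
-/

theorem Finset.inf'_le_sup'_of_apply_eq {ι α : Type*} [Lattice α] {s : Finset ι}
    (hs : s.Nonempty) {f g : ι → α} {a : ι} (ha : a ∈ s) (h : f a = g a) :
    s.inf' hs f ≤ s.sup' hs g :=
  (inf'_le f ha).trans (h ▸ le_sup' g ha)

theorem Finset.sup'_le_sq_mul_inf'_of_apply_eq {ι : Type*} {s : Finset ι} (hs : s.Nonempty)
    {f g : ι → ℝ} {C q q' : ℝ} (hC : 0 ≤ C) (hq : 0 ≤ q) (hqq' : q ≤ q')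
    (hg : 0 ≤ s.inf' hs g)
    (hf_bal : s.sup' hs f ≤ C * s.inf' hs f * q) (hg_bal : s.sup' hs g ≤ C * s.inf' hs g * q')
    {a : ι} (ha : a ∈ s) (hfg : f a = g a) :
    s.sup' hs f ≤ C ^ 2 * s.inf' hs g * q' ^ 2 := by
  have hq' : 0 ≤ q' := hq.trans hqq'
  calc s.sup' hs f ≤ C * s.inf' hs f * q := hf_bal
    _ ≤ C * (C * s.inf' hs g * q') * q := by
        gcongr
        exact (inf'_le_sup'_of_apply_eq hs ha hfg).trans hg_bal
    _ ≤ C * (C * s.inf' hs g * q') * q' := by gcongr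
    _ = C ^ 2 * s.inf' hs g * q' ^ 2 := by ring

theorem stmt2_general {d : ℕ}
    (lam : ℕ → Fin d → ℝ) (hlam : ∀ k i, 0 < lam k i)
    (nZ nQ : ℕ → ℝ) (hnQ : ∀ k, 1 ≤ nQ k)
    (hne : (univ : Finset (Fin d)).Nonempty)
    (hbal : ∀ ε : ℝ, 0 < ε → ∃ C : ℝ, 0 < C ∧ ∀ k,
      univ.sup' hne (lam k) ≤ C * univ.inf' hne (lam k) * (nQ k) ^ ε)
    (hstep : ∀ k, univ.inf' hne (lam (k + 1)) * nZ (k + 1) / (2 * d) ≤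
      univ.sup' hne (lam k))
    (hfix : ∀ k, ∃ α₀ : Fin d, lam k α₀ = lam (k + 1) α₀)
    (hmono : ∀ k, nQ k ≤ nQ (k + 1)) :
    ∀ ε : ℝ, 0 < ε → ∃ C' : ℝ, 0 < C' ∧ ∀ k,
      nZ (k + 1) ≤ C' * (nQ (k + 1)) ^ (2 * ε) := by
  intro ε hε
  obtain ⟨C, hC, hC_bal⟩ := hbal ε hε
  have hd : (0 : ℝ) < d := Nat.cast_pos.mpr (Fin.pos_iff_nonempty.mpr (univ_nonempty_iff.mp hne))
  refine ⟨2 * d * C ^ 2, by positivity, fun k => ?_⟩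
  have hQ : ∀ k, 0 < nQ k := fun k => one_pos.trans_le (hnQ k)
  have hinf : 0 < univ.inf' hne (lam (k + 1)) := (lt_inf'_iff hne).mpr fun i _ => hlam (k + 1) i
  obtain ⟨α₀, hα₀⟩ := hfix k
  have hsup := sup'_le_sq_mul_inf'_of_apply_eq hne hC.le (Real.rpow_nonneg (hQ k).le ε)
    (Real.rpow_le_rpow (hQ k).le (hmono k) hε.le) hinf.le (hC_bal k) (hC_bal (k + 1))
    (mem_univ α₀) hα₀
  have hZ := (hstep k).trans hsup
  rw [div_le_iff₀ (by positivity)] at hZ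
  rw [mul_comm 2 ε, Real.rpow_mul (hQ _).le, Real.rpow_two]
  exact le_of_mul_le_mul_left (by linarith) hinf

/-- converse direction of the proposition relating condition (a)
to balance of the interval lengths. All matrix norms are abstracted as the
real-valued functions `nZ k = ‖Z k‖` and `nQ k = ‖Q k‖`. -/
theorem stmt2 {d : ℕ} (hd : 1 ≤ d)
    (lam : ℕ → Fin d → ℝ) (hlam : ∀ k i, 0 < lam k i)
    (nZ nQ : ℕ → ℝ) (hnZ : ∀ k, 0 < nZ k) (hnQ : ∀ k, 1 ≤ nQ k)
    (hne : (univ : Finset (Fin d)).Nonempty)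
    (hbal : ∀ ε : ℝ, 0 < ε → ∃ C : ℝ, 0 < C ∧ ∀ k,
      univ.sup' hne (lam k) ≤ C * univ.inf' hne (lam k) * (nQ k) ^ ε)
    (hstep : ∀ k, univ.inf' hne (lam (k + 1)) * nZ (k + 1) / (2 * d) ≤
      univ.sup' hne (lam k))
    (hfix : ∀ k, ∃ α₀ : Fin d, lam k α₀ = lam (k + 1) α₀)
    (hmono : ∀ k, nQ k ≤ nQ (k + 1)) :
    ∀ ε : ℝ, 0 < ε → ∃ C' : ℝ, 0 < C' ∧ ∀ k,
      nZ (k + 1) ≤ C' * (nQ (k + 1)) ^ (2 * ε) :=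
  stmt2_general lam hlam nZ nQ hnQ hne hbal hstep hfix hmono
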